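/- Let f_x, f_p : ℝ^d × ℝ^d → ℝ^d be continuously differentiable and let K be a real d×d matrix. Then the pair (f_x, f_p) satisfies f_x(exp(θK)x, exp(−θKᵀ)p) = exp(−θKᵀ) f_x(x,p) and f_p(exp(θK)x, exp(−θKᵀ)p) = exp(θK) f_p(x,p) for all θ ∈ ℝ and all (x,p) if and only if, for all (x,p): D_x f_x(x,p)(Kx) − D_p f_x(x,p)(Kᵀp) + Kᵀ f_x(x,p) = 0 and D_x f_p(x,p)(Kx) − D_p f_p(x,p)(Kᵀp) − K f_p(x,p) = 0, where D_x and D_p denote the partial Jacobians with respect to the x and p variables. -/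

import Mathlib

/-!
Along the orbit `γ(t) = (exp(tK)x, exp(-tKᵀ)p)` the chain rule gives
`(f ∘ γ)'(t) = Df(γ t)(K γ₁ t, -Kᵀ γ₂ t)`, so the PDE for `f_x` (resp. `f_p`) says exactly that
`g = f ∘ γ` solves the linear ODE `g' = A g` with `A = -Kᵀ` (resp. `A = K`), while equivariance
says `g(t) = exp(tA) g(0)`. Differentiating at `t = 0` gives one direction; for the other,
`exp(-tA) g(t)` has zero derivative and is therefore constant.
-/

open Matrix

-- Matrices carry no global norm; only the topology, which every such norm induces, is used.
attribute [local instance] Matrix.linftyOpNormedAddCommGroup Matrix.linftyOpNormedSpace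
  Matrix.linftyOpNormedRing Matrix.linftyOpNormedAlgebra

section LinearFlow

variable {ι : Type*} [Fintype ι] [DecidableEq ι]

theorem hasDerivAt_exp_smul_mulVec (A : Matrix ι ι ℝ) {u : ℝ → ι → ℝ} {u' : ι → ℝ} {t : ℝ}
    (hu : HasDerivAt u u' t) :
    HasDerivAt (fun s => NormedSpace.exp (s • A) *ᵥ u s)
      (A *ᵥ (NormedSpace.exp (t • A) *ᵥ u t) + NormedSpace.exp (t • A) *ᵥ u') t := by
  have h : HasDerivAt (fun s => NormedSpace.exp (s • A) *ᵥ u s)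
      (NormedSpace.exp (t • A) *ᵥ u' + (A * NormedSpace.exp (t • A)) *ᵥ u t) t :=
    ContinuousLinearMap.hasDerivAt_of_bilinear
      (B := (mulVecBilin ℝ ℝ : Matrix ι ι ℝ →ₗ[ℝ] _).toContinuousBilinearMap)
      (fun _ => hasDerivAt_exp_smul_const' A t) (fun _ => hu)
  rwa [add_comm, ← mulVec_mulVec] at h

theorem eq_exp_smul_mulVec_of_hasDerivAt (A : Matrix ι ι ℝ) {g : ℝ → ι → ℝ}
    (hg : ∀ t, HasDerivAt g (A *ᵥ g t) t) (t : ℝ) :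
    g t = NormedSpace.exp (t • A) *ᵥ g 0 := by
  have hderiv : ∀ s, HasDerivAt (fun s => NormedSpace.exp (s • -A) *ᵥ g s) 0 s := fun s => by
    convert hasDerivAt_exp_smul_mulVec (-A) (hg s) using 1
    rw [mulVec_mulVec, mulVec_mulVec, ((Commute.refl A).neg_left.smul_left s).exp_left.eq,
      Matrix.neg_mul, neg_mulVec, neg_add_cancel]
  have hconst := is_const_of_deriv_eq_zero (fun s => (hderiv s).differentiableAt)
    (fun s => (hderiv s).deriv) t 0
  have hinv : NormedSpace.exp (t • A) * NormedSpace.exp (t • -A) = 1 := by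
    rw [smul_neg, ← Matrix.exp_add_of_commute _ _ (Commute.refl (t • A)).neg_right,
      add_neg_cancel, NormedSpace.exp_zero]
  simpa only [mulVec_mulVec, hinv, one_mulVec, zero_smul, NormedSpace.exp_zero] using
    congrArg (NormedSpace.exp (t • A) *ᵥ ·) hconst

theorem comp_flow_eq_exp_smul_mulVec_iff {E : Type*} [NormedAddCommGroup E] [NormedSpace ℝ E]
    (A : Matrix ι ι ℝ) {f : E → ι → ℝ} (hf : Differentiable ℝ f) {V : E → E} {γ : E → ℝ → E}
    (hγ₀ : ∀ z, γ z 0 = z) (hγ : ∀ z t, HasDerivAt (γ z) (V (γ z t)) t) :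
    (∀ t z, f (γ z t) = NormedSpace.exp (t • A) *ᵥ f z) ↔
      ∀ z, fderiv ℝ f z (V z) = A *ᵥ f z := by
  have hcomp : ∀ z t, HasDerivAt (fun s => f (γ z s)) (fderiv ℝ f (γ z t) (V (γ z t))) t :=
    fun z t => (hf _).hasFDerivAt.comp_hasDerivAt t (hγ z t)
  constructor
  · intro h z
    have hexp : HasDerivAt (fun s => f (γ z s)) (A *ᵥ f z) 0 := by
      simpa [funext fun s => h s z] using
        hasDerivAt_exp_smul_mulVec A (hasDerivAt_const (0 : ℝ) (f z))
    simpa [hγ₀] using (hcomp z 0).unique hexp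
  · intro h t z
    have := eq_exp_smul_mulVec_of_hasDerivAt A (fun s => h (γ z s) ▸ hcomp z s) t
    rwa [hγ₀] at this

end LinearFlow

theorem fderiv_uncurry_apply {𝕜 E F G : Type*} [NontriviallyNormedField 𝕜]
    [NormedAddCommGroup E] [NormedSpace 𝕜 E] [NormedAddCommGroup F] [NormedSpace 𝕜 F]
    [NormedAddCommGroup G] [NormedSpace 𝕜 G] {H : E → F → G} {x : E} {p : F}
    (hH : DifferentiableAt 𝕜 (fun q : E × F => H q.1 q.2) (x, p)) (v : E) (w : F) :
    fderiv 𝕜 (fun q : E × F => H q.1 q.2) (x, p) (v, w) =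
      fderiv 𝕜 (H · p) x v + fderiv 𝕜 (H x ·) p w := by
  have hx : HasFDerivAt (H · p)
      ((fderiv 𝕜 (fun q : E × F => H q.1 q.2) (x, p)).comp (.inl 𝕜 E F)) x :=
    (hH.hasFDerivAt.comp x (hasFDerivAt_prodMk_left (𝕜 := 𝕜) x p) :)
  have hp : HasFDerivAt (H x ·)
      ((fderiv 𝕜 (fun q : E × F => H q.1 q.2) (x, p)).comp (.inr 𝕜 E F)) p :=
    (hH.hasFDerivAt.comp p (hasFDerivAt_prodMk_right (𝕜 := 𝕜) x p) :)
  rw [hx.fderiv, hp.fderiv, ContinuousLinearMap.comp_apply, ContinuousLinearMap.comp_apply,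
    ← map_add, ContinuousLinearMap.inl_apply, ContinuousLinearMap.inr_apply, Prod.mk_add_mk,
    add_zero, zero_add]

section CanonicalFlow

variable {ι : Type*} [Fintype ι] [DecidableEq ι] (K : Matrix ι ι ℝ)

noncomputable def canonicalFlow (z : (ι → ℝ) × (ι → ℝ)) (t : ℝ) : (ι → ℝ) × (ι → ℝ) :=
  (NormedSpace.exp (t • K) *ᵥ z.1, NormedSpace.exp (t • -Kᵀ) *ᵥ z.2)

theorem canonicalFlow_zero (z : (ι → ℝ) × (ι → ℝ)) : canonicalFlow K z 0 = z := by
  simp [canonicalFlow]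

theorem hasDerivAt_canonicalFlow (z : (ι → ℝ) × (ι → ℝ)) (t : ℝ) :
    HasDerivAt (canonicalFlow K z)
      (K *ᵥ (canonicalFlow K z t).1, -Kᵀ *ᵥ (canonicalFlow K z t).2) t := by
  have h := (hasDerivAt_exp_smul_mulVec K (hasDerivAt_const t z.1)).prodMk
    (hasDerivAt_exp_smul_mulVec (-Kᵀ) (hasDerivAt_const t z.2))
  simp only [mulVec_zero, add_zero] at h
  exact h

end CanonicalFlow

/-- Canonical equivariance: the pair `(f_x, f_p)` of continuously differentiable maps
`ℝ^d × ℝ^d → ℝ^d` satisfies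
`f_x(exp(θK)x, exp(−θKᵀ)p) = exp(−θKᵀ) f_x(x,p)` and
`f_p(exp(θK)x, exp(−θKᵀ)p) = exp(θK) f_p(x,p)` for all `θ, x, p`
if and only if for all `(x,p)`:
`D_x f_x(x,p)(Kx) − D_p f_x(x,p)(Kᵀp) + Kᵀ f_x(x,p) = 0` and
`D_x f_p(x,p)(Kx) − D_p f_p(x,p)(Kᵀp) − K f_p(x,p) = 0`. -/
theorem canonical_equivariance_iff_pde (d : ℕ)
    (fx fp : (Fin d → ℝ) → (Fin d → ℝ) → (Fin d → ℝ))
    (hfx : ContDiff ℝ 1 (fun q : (Fin d → ℝ) × (Fin d → ℝ) => fx q.1 q.2))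
    (hfp : ContDiff ℝ 1 (fun q : (Fin d → ℝ) × (Fin d → ℝ) => fp q.1 q.2))
    (K : Matrix (Fin d) (Fin d) ℝ) :
    (∀ (θ : ℝ) (x p : Fin d → ℝ),
      fx ((NormedSpace.exp (θ • K)).mulVec x) ((NormedSpace.exp ((-θ) • Kᵀ)).mulVec p)
        = (NormedSpace.exp ((-θ) • Kᵀ)).mulVec (fx x p) ∧
      fp ((NormedSpace.exp (θ • K)).mulVec x) ((NormedSpace.exp ((-θ) • Kᵀ)).mulVec p)
        = (NormedSpace.exp (θ • K)).mulVec (fp x p)) ↔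
    (∀ (x p : Fin d → ℝ),
      fderiv ℝ (fun x' => fx x' p) x (K.mulVec x)
          - fderiv ℝ (fun p' => fx x p') p (Kᵀ.mulVec p)
          + Kᵀ.mulVec (fx x p) = 0 ∧
      fderiv ℝ (fun x' => fp x' p) x (K.mulVec x)
          - fderiv ℝ (fun p' => fp x p') p (Kᵀ.mulVec p)
          - K.mulVec (fp x p) = 0) := by
  have hFx := hfx.differentiable one_ne_zero
  have hFp := hfp.differentiable one_ne_zero
  have hfx_iff := comp_flow_eq_exp_smul_mulVec_iff (-Kᵀ) hFx (V := fun w => (K *ᵥ w.1, -Kᵀ *ᵥ w.2))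
    (canonicalFlow_zero K) (hasDerivAt_canonicalFlow K)
  have hfp_iff := comp_flow_eq_exp_smul_mulVec_iff K hFp (V := fun w => (K *ᵥ w.1, -Kᵀ *ᵥ w.2))
    (canonicalFlow_zero K) (hasDerivAt_canonicalFlow K)
  simp only [canonicalFlow, Prod.forall, fderiv_uncurry_apply (hFx _),
    fderiv_uncurry_apply (hFp _), smul_neg] at hfx_iff hfp_iff
  simp only [forall_and, neg_smul]
  rw [hfx_iff, hfp_iff]
  refine and_congr (forall₂_congr fun x p => ?_) (forall₂_congr fun x p => ?_) <;>
    simp only [neg_mulVec, map_neg, ← sub_eq_add_neg]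
  · exact eq_neg_iff_add_eq_zero
  · exact sub_eq_zero.symm
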